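/- arXiv:1912.05712 — 6 statements merged into one kernel-verified Lean document; each statement's English description precedes it below -/
import Mathlib

section
/- Let n, k ≥ 1 be integers, let P ⊆ [0,k]ⁿ be a set, and let c', c ∈ ℤⁿ be such that 2c' − c ∈ {0,1}ⁿ (componentwise). Suppose x' ∈ P maximizes c'ᵀx over P and x'' ∈ P maximizes cᵀx over P. Then cᵀx'' − cᵀx' ≤ n·k. -/
/-! Write `c = 2c' - d` with `d ∈ [0,1]ⁿ`. Then
`cᵀx'' - cᵀx' = 2(c'ᵀx'' - c'ᵀx') - dᵀx'' + dᵀx'`: the first term is `≤ 0` because `x'` is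
`c'`-optimal, `-dᵀx'' ≤ 0` because `x''` is nonnegative, and `dᵀx' ≤ n·k` because `x'`
lies in the box. -/

open Finset

section

variable {ι : Type*} [Fintype ι]

lemma sum_mul_le_card_mul {d x : ι → ℝ} {k : ℝ} (hd : ∀ j, d j ∈ Set.Icc 0 1)
    (hx : ∀ j, x j ∈ Set.Icc 0 k) : ∑ j, d j * x j ≤ Fintype.card ι * k := by
  calc ∑ j, d j * x j ≤ ∑ _j : ι, k :=
        sum_le_sum fun j _ => (mul_le_of_le_one_left (hx j).1 (hd j).2).trans (hx j).2
    _ = Fintype.card ι * k := by simp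

lemma sum_mul_sub_sum_mul_le_card_mul {c' c x x' : ι → ℝ} {k : ℝ}
    (hd : ∀ j, 2 * c' j - c j ∈ Set.Icc 0 1) (hx : ∀ j, x j ∈ Set.Icc 0 k)
    (hx' : ∀ j, x' j ∈ Set.Icc 0 k)
    (hopt' : ∑ j, c' j * x j ≤ ∑ j, c' j * x' j) :
    ∑ j, c j * x j - ∑ j, c j * x' j ≤ Fintype.card ι * k := by
  have hsplit : ∀ y : ι → ℝ,
      ∑ j, c j * y j = 2 * ∑ j, c' j * y j - ∑ j, (2 * c' j - c j) * y j := fun y => by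
    rw [mul_sum, ← sum_sub_distrib]
    exact sum_congr rfl fun j _ => by ring
  have hx_nonneg : 0 ≤ ∑ j, (2 * c' j - c j) * x j :=
    sum_nonneg fun j _ => mul_nonneg (hd j).1 (hx j).1
  have hx'_le := sum_mul_le_card_mul hd hx'
  rw [hsplit x, hsplit x']
  linarith

end

theorem scaling_step_gap_bound_general
    (n k : ℕ)
    (P : Set (Fin n → ℝ))
    (hbox : ∀ x ∈ P, ∀ j, 0 ≤ x j ∧ x j ≤ (k : ℝ))
    (c' c : Fin n → ℤ)
    (hdiff : ∀ j, 2 * c' j - c j = 0 ∨ 2 * c' j - c j = 1)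
    (x' x'' : Fin n → ℝ) (hx' : x' ∈ P) (hx'' : x'' ∈ P)
    (hopt' : ∀ x ∈ P, ∑ j, (c' j : ℝ) * x j ≤ ∑ j, (c' j : ℝ) * x' j) :
    ∑ j, (c j : ℝ) * x'' j - ∑ j, (c j : ℝ) * x' j ≤ (n : ℝ) * k := by
  have hd : ∀ j, 2 * (c' j : ℝ) - c j ∈ Set.Icc 0 1 := fun j => by
    rw [show 2 * (c' j : ℝ) - c j = ((2 * c' j - c j : ℤ) : ℝ) by push_cast; ring]
    rcases hdiff j with h | h <;> simp [h]
  simpa using sum_mul_sub_sum_mul_le_card_mul hd (hbox x'' hx'') (hbox x' hx') (hopt' x'' hx'')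

theorem scaling_step_gap_bound
    (n k : ℕ) (hn : 1 ≤ n) (hk : 1 ≤ k)
    (P : Set (Fin n → ℝ))
    (hbox : ∀ x ∈ P, ∀ j, 0 ≤ x j ∧ x j ≤ (k : ℝ))
    (c' c : Fin n → ℤ)
    (hdiff : ∀ j, 2 * c' j - c j = 0 ∨ 2 * c' j - c j = 1)
    (x' x'' : Fin n → ℝ) (hx' : x' ∈ P) (hx'' : x'' ∈ P)
    (hopt' : ∀ x ∈ P, ∑ j, (c' j : ℝ) * x j ≤ ∑ j, (c' j : ℝ) * x' j)
    (hopt : ∀ x ∈ P, ∑ j, (c j : ℝ) * x j ≤ ∑ j, (c j : ℝ) * x'' j) :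
    ∑ j, (c j : ℝ) * x'' j - ∑ j, (c j : ℝ) * x' j ≤ (n : ℝ) * k :=
  scaling_step_gap_bound_general n k P hbox c' c hdiff x' x'' hx' hx'' hopt'
end

section
/- Let n, k ≥ 1 be integers, let P ⊆ ℝⁿ be a [0,k]-polytope, let c ∈ ℤⁿ be nonzero, and let x⁰ be a vertex of P. Then there exists a simplex path in P from x⁰ to a vertex x* that maximizes cᵀx over P, whose length is at most n·k·(⌈log₂‖c‖_∞⌉ + 1). -/
/-!
Bit scaling. Put `c_s j = ⌊c j / 2 ^ s⌋` and `T = ⌈log₂ M⌉`, so that `c_T ∈ {-1, 0, 1}ⁿ` and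
`c_s - 2 c_{s+1} ∈ {0, 1}ⁿ`. If `x` maximizes `c_{s+1}` over `P ⊆ [0, k]ⁿ`, then for `z ∈ P`
`c_s z - c_s x ≤ 2 (c_{s+1} z - c_{s+1} x) + n k ≤ n k`, and at any vertex the same bound holds for
`c_T`. The objectives are integral on the integral vertices, so a monotone edge path gains at least
one per step: phase `s` takes at most `n k` steps, and there are `T + 1` phases.

A non-optimal vertex `x` has an improving neighbour. Separate `x` from the other vertices of a face
by a functional `f`, and tilt the objective `w` to `w + β f` with `β` least such that it is still
maximal at `x`. Its maximal face contains `x` and an improving vertex; while it is smaller, recurse.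
-/

/-- A vertex of `P` is an extreme point of `P`. -/
def IsVertex {n : ℕ} (P : Set (Fin n → ℝ)) (x : Fin n → ℝ) : Prop :=
  x ∈ Set.extremePoints ℝ P

/-- Two distinct vertices are adjacent if the segment between them is a face
(i.e. an extreme subset) of `P`. -/
def AdjacentVertices {n : ℕ} (P : Set (Fin n → ℝ)) (x y : Fin n → ℝ) : Prop :=
  x ≠ y ∧ IsVertex P x ∧ IsVertex P y ∧ IsExtreme ℝ P (segment ℝ x y)

/-- A `[0,k]`-polytope in `ℝⁿ`: the convex hull of a finite set, contained in the box
`[0,k]ⁿ`, all of whose vertices (extreme points) have integer coordinates. -/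
def IsZeroKPolytope (n k : ℕ) (P : Set (Fin n → ℝ)) : Prop :=
  (∃ V : Set (Fin n → ℝ), V.Finite ∧ P = convexHull ℝ V) ∧
  (∀ x ∈ P, ∀ j, 0 ≤ x j ∧ x j ≤ (k : ℝ)) ∧
  (∀ x, IsVertex P x → ∀ j, ∃ z : ℤ, x j = (z : ℝ))

open Set Finset

theorem Finset.exists_le_mul_and_eq_mul {ι : Type*} {s : Finset ι} (hs : s.Nonempty)
    (a b : ι → ℝ) (hb : ∀ i ∈ s, 0 < b i) :
    ∃ β : ℝ, (∀ i ∈ s, a i ≤ β * b i) ∧ ∃ i ∈ s, a i = β * b i := by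
  obtain ⟨i, hi, hmax⟩ := s.exists_max_image (fun i => a i / b i) hs
  exact ⟨a i / b i, fun j hj => (div_le_iff₀ (hb j hj)).1 (hmax j hj), i, hi,
    (div_mul_cancel₀ _ (hb i hi).ne').symm⟩

section Polytope

variable {E : Type*} [AddCommGroup E] [Module ℝ E]

-- For `E = Fin n → ℝ` the adjacency relation is `AdjacentVertices P`.
def polytopeGraph (P : Set E) : SimpleGraph E where
  Adj x y := x ≠ y ∧ x ∈ P.extremePoints ℝ ∧ y ∈ P.extremePoints ℝ ∧ IsExtreme ℝ P (segment ℝ x y)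
  symm := ⟨fun _ _ h => ⟨h.1.symm, h.2.2.1, h.2.1, segment_symm ℝ (E := E) _ _ ▸ h.2.2.2⟩⟩
  loopless := ⟨fun _ h => h.1 rfl⟩

theorem polytopeGraph.mem_extremePoints_of_walk {P : Set E} {x y : E}
    (p : (polytopeGraph P).Walk x y) (hx : x ∈ P.extremePoints ℝ) : y ∈ P.extremePoints ℝ := by
  cases h : p.reverse with
  | nil => exact hx
  | cons hadj _ => exact hadj.2.1

variable [TopologicalSpace E]

theorem ContinuousLinearMap.le_of_mem_convexHull (g : StrongDual ℝ E) {W : Set E} {b : ℝ}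
    (hW : ∀ u ∈ W, g u ≤ b) {y : E} (hy : y ∈ convexHull ℝ W) : g y ≤ b :=
  convexHull_min hW ((convex_Iic b).linear_preimage g.toLinearMap) hy

theorem Finset.convexHull_eq_segment_of_forall_ratio [SeparatingDual ℝ E] [DecidableEq E]
    {W : Finset E} {x : E} (f : StrongDual ℝ E) (hx : x ∈ W)
    (hf : ∀ u ∈ W.erase x, f u < f x) (hne : (W.erase x).Nonempty)
    (hcol : ∀ ℓ : StrongDual ℝ E, ∃ γ : ℝ, ∀ u ∈ W.erase x, ℓ u - ℓ x = γ * (f x - f u)) :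
    ∃ y ∈ W.erase x, convexHull ℝ (W : Set E) = segment ℝ x y := by
  obtain ⟨y, hy, hymin⟩ := (W.erase x).exists_min_image f hne
  have hfy : 0 < f x - f y := sub_pos.2 (hf y hy)
  have hfW : ∀ u ∈ W, f y ≤ f u ∧ f u ≤ f x := by
    intro u hu
    rcases eq_or_ne u x with rfl | hux
    · exact ⟨(hf y hy).le, le_rfl⟩
    · exact ⟨hymin u (mem_erase.2 ⟨hux, hu⟩), (hf u (mem_erase.2 ⟨hux, hu⟩)).le⟩
  have hℓW : ∀ ℓ : StrongDual ℝ E, ∃ γ : ℝ, ∀ u ∈ W, ℓ u - ℓ x = γ * (f x - f u) := by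
    intro ℓ
    obtain ⟨γ, hγ⟩ := hcol ℓ
    refine ⟨γ, fun u hu => ?_⟩
    rcases eq_or_ne u x with rfl | hux
    · simp
    · exact hγ u (mem_erase.2 ⟨hux, hu⟩)
  refine ⟨y, hy, (convexHull_min (fun u hu => ?_) (convex_segment x y)).antisymm ?_⟩
  · set t := (f x - f u) / (f x - f y)
    have ht : t * (f x - f y) = f x - f u := div_mul_cancel₀ _ hfy.ne'
    refine ⟨1 - t, t, ?_, div_nonneg (by linarith [hfW u hu]) hfy.le, by ring, ?_⟩
    · rw [sub_nonneg, div_le_one hfy]; linarith [hfW u hu]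
    · refine (SeparatingDual.eq_iff_forall_dual_eq (R := ℝ)).2 fun ℓ => ?_
      obtain ⟨γ, hγ⟩ := hℓW ℓ
      simp only [map_add, map_smul, smul_eq_mul]
      linear_combination t * hγ y (mem_of_mem_erase hy) + γ * ht - hγ u hu
  · rw [← convexHull_pair]
    refine convexHull_mono ?_
    rintro z (rfl | rfl)
    exacts [hx, mem_of_mem_erase hy]

variable [T2Space E] [IsTopologicalAddGroup E] [ContinuousSMul ℝ E] [LocallyConvexSpace ℝ E]

theorem Set.Finite.convexHull_extremePoints_convexHull {V : Set E} (hV : V.Finite) :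
    convexHull ℝ ((convexHull ℝ V).extremePoints ℝ) = convexHull ℝ V := by
  rw [← ((hV.subset extremePoints_convexHull_subset).isClosed_convexHull ℝ).closure_eq]
  exact closure_convexHull_extremePoints (hV.isCompact_convexHull ℝ) (convex_convexHull ℝ V)

theorem Set.Finite.convexHull_toExposed {W : Set E} (hW : W.Finite) (g : StrongDual ℝ E) :
    convexHull ℝ (g.toExposed W) = g.toExposed (convexHull ℝ W) := by
  have hexp : IsExposed ℝ (convexHull ℝ W) (g.toExposed (convexHull ℝ W)) :=
    ContinuousLinearMap.toExposed.isExposed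
  have hconv := hexp.convex (convex_convexHull ℝ W)
  apply Subset.antisymm
  · refine convexHull_min ?_ hconv
    rintro u ⟨huW, hu⟩
    exact ⟨subset_convexHull ℝ W huW, fun y hy => g.le_of_mem_convexHull hu hy⟩
  · rw [← closure_convexHull_extremePoints (hexp.isCompact (hW.isCompact_convexHull ℝ)) hconv]
    refine closure_minimal (convexHull_mono fun z hz => ?_)
      ((hW.subset (sep_subset _ _)).isClosed_convexHull ℝ)
    exact ⟨extremePoints_convexHull_subset (hexp.isExtreme.extremePoints_subset_extremePoints hz),
      fun y hy => (extremePoints_subset hz).2 y (subset_convexHull ℝ W hy)⟩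

theorem Finset.exists_ssubset_isExtreme_of_supporting {W : Finset E} {x u v : E}
    (g : StrongDual ℝ E) (hx : x ∈ W) (hg : ∀ z ∈ W, g z ≤ g x) (hu : u ∈ W) (hgu : g u = g x)
    (hv : v ∈ W) (hgv : g v < g x) :
    ∃ W' ⊂ W, x ∈ W' ∧ u ∈ W' ∧
      IsExtreme ℝ (convexHull ℝ (W : Set E)) (convexHull ℝ (W' : Set E)) := by
  classical
  let W' := W.filter fun z => ∀ y ∈ W, g y ≤ g z
  have hW' : (W' : Set E) = g.toExposed W := by
    ext; simp [W', ContinuousLinearMap.toExposed]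
  refine ⟨W', filter_ssubset.2 ⟨v, hv, fun h => (h x hx).not_gt hgv⟩, mem_filter.2 ⟨hx, hg⟩,
    mem_filter.2 ⟨hu, hgu ▸ hg⟩, ?_⟩
  rw [hW', W.finite_toSet.convexHull_toExposed]
  exact ContinuousLinearMap.toExposed.isExposed.isExtreme

theorem Finset.exists_segment_or_ssubset_face [DecidableEq E] {W : Finset E} {x : E}
    (w f : StrongDual ℝ E) (hx : x ∈ W)
    (hf : ∀ u ∈ W.erase x, f u < f x) (himp : ∃ u ∈ W, w x < w u) :
    (∃ y ∈ W, w x < w y ∧ convexHull ℝ (W : Set E) = segment ℝ x y) ∨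
      ∃ W' ⊂ W, x ∈ W' ∧ IsExtreme ℝ (convexHull ℝ (W : Set E)) (convexHull ℝ (W' : Set E)) ∧
        ∃ u ∈ W', w x < w u := by
  obtain ⟨u₁, hu₁W, hwu₁⟩ := himp
  have hu₁ : u₁ ∈ W.erase x := mem_erase.2 ⟨fun h => hwu₁.ne (congrArg w h.symm), hu₁W⟩
  have hne : (W.erase x).Nonempty := ⟨u₁, hu₁⟩
  have hpos : ∀ u ∈ W.erase x, 0 < f x - f u := fun u hu => sub_pos.2 (hf u hu)
  have smaller_face : ∀ (ℓ : StrongDual ℝ E) (γ : ℝ),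
      (∀ u ∈ W.erase x, ℓ u - ℓ x ≤ γ * (f x - f u)) →
      ∀ u ∈ W.erase x, ℓ u - ℓ x = γ * (f x - f u) → w x < w u →
      ∀ v ∈ W.erase x, ℓ v - ℓ x ≠ γ * (f x - f v) →
      ∃ W' ⊂ W, x ∈ W' ∧ IsExtreme ℝ (convexHull ℝ (W : Set E)) (convexHull ℝ (W' : Set E)) ∧
        ∃ u ∈ W', w x < w u := by
    intro ℓ γ hγ u hu hγu hwu v hv hγv
    have tilt : ∀ z, (ℓ + γ • f) z - (ℓ + γ • f) x = (ℓ z - ℓ x) - γ * (f x - f z) := by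
      intro z; simp only [add_apply, smul_apply, smul_eq_mul]; ring
    have hsupp : ∀ z ∈ W, (ℓ + γ • f) z ≤ (ℓ + γ • f) x := by
      intro z hz
      rcases eq_or_ne z x with rfl | hzx
      · exact le_rfl
      · linarith [tilt z, hγ z (mem_erase.2 ⟨hzx, hz⟩)]
    obtain ⟨W', hW', hxW', huW', hface⟩ := exists_ssubset_isExtreme_of_supporting (ℓ + γ • f) hx
      hsupp (mem_of_mem_erase hu) (by linarith [tilt u]) (mem_of_mem_erase hv)
      (by linarith [tilt v, lt_of_le_of_ne (hγ v hv) hγv])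
    exact ⟨W', hW', hxW', hface, u, huW', hwu⟩
  obtain ⟨β, hβ, u₂, hu₂, hβu₂⟩ :=
    exists_le_mul_and_eq_mul hne (fun u => w u - w x) (fun u => f x - f u) hpos
  have hβpos : 0 < β :=
    pos_of_mul_pos_left ((sub_pos.2 hwu₁).trans_le (hβ u₁ hu₁)) (hpos u₁ hu₁).le
  by_cases hall : ∀ u ∈ W.erase x, w u - w x = β * (f x - f u)
  · -- `w + β • f` is constant on `W`, so every point of `W` but `x` improves `w`: any functional
    -- tilted to be maximal at `x` yields a smaller face, unless `W` lies on a ray from `x`.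
    have himp_all : ∀ u ∈ W.erase x, w x < w u := fun u hu =>
      sub_pos.1 ((hall u hu).symm ▸ mul_pos hβpos (hpos u hu))
    by_cases hcol : ∀ ℓ : StrongDual ℝ E, ∃ γ : ℝ, ∀ u ∈ W.erase x, ℓ u - ℓ x = γ * (f x - f u)
    · obtain ⟨y, hy, hseg⟩ := convexHull_eq_segment_of_forall_ratio f hx hf hne hcol
      exact Or.inl ⟨y, mem_of_mem_erase hy, himp_all y hy, hseg⟩
    · push Not at hcol
      obtain ⟨ℓ, hℓ⟩ := hcol
      obtain ⟨γ, hγ, u₃, hu₃, hγu₃⟩ :=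
        exists_le_mul_and_eq_mul hne (fun u => ℓ u - ℓ x) (fun u => f x - f u) hpos
      obtain ⟨v, hv, hγv⟩ := hℓ γ
      exact Or.inr (smaller_face ℓ γ hγ u₃ hu₃ hγu₃ (himp_all u₃ hu₃) v hv hγv)
  · push Not at hall
    obtain ⟨v, hv, hβv⟩ := hall
    exact Or.inr (smaller_face w β hβ u₂ hu₂ hβu₂
      (sub_pos.1 (hβu₂ ▸ mul_pos hβpos (hpos u₂ hu₂))) v hv hβv)

theorem exists_polytopeGraph_adj_lt_of_isExtreme [DecidableEq E] {P : Set E}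
    (w : StrongDual ℝ E) {x : E} {W : Finset E} (hWP : (W : Set E) ⊆ P.extremePoints ℝ)
    (hxW : x ∈ W) (hface : IsExtreme ℝ P (convexHull ℝ (W : Set E))) (himp : ∃ u ∈ W, w x < w u) :
    ∃ y, (polytopeGraph P).Adj x y ∧ w x < w y := by
  induction W using Finset.strongInduction with
  | H W IH =>
  have hsep : x ∉ convexHull ℝ ((W.erase x : Finset E) : Set E) := fun hmem =>
    have hsub : convexHull ℝ ((W.erase x : Finset E) : Set E) ⊆ P :=
      (convexHull_mono (coe_subset.2 (erase_subset x W))).trans hface.1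
    notMem_erase x W (extremePoints_convexHull_subset
      (inter_extremePoints_subset_extremePoints_of_subset hsub ⟨hmem, hWP hxW⟩))
  obtain ⟨f, b, hfb, hbf⟩ := geometric_hahn_banach_closed_point (convex_convexHull ℝ _)
    ((W.erase x).finite_toSet.isClosed_convexHull ℝ) hsep
  rcases W.exists_segment_or_ssubset_face w f hxW
      (fun u hu => (hfb u (subset_convexHull ℝ _ hu)).trans hbf) himp with
    ⟨y, hyW, hwy, hseg⟩ | ⟨W', hW'W, hxW', hface', himp'⟩
  · exact ⟨y, ⟨fun h => hwy.ne (congrArg w h), hWP hxW, hWP hyW, hseg ▸ hface⟩, hwy⟩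
  · exact IH W' hW'W ((coe_subset.2 hW'W.subset).trans hWP) hxW' (hface.trans hface') himp'

theorem exists_polytopeGraph_adj_lt {V : Set E} (hV : V.Finite) (w : StrongDual ℝ E) {x z : E}
    (hx : x ∈ (convexHull ℝ V).extremePoints ℝ) (hz : z ∈ convexHull ℝ V) (hwz : w x < w z) :
    ∃ y, (polytopeGraph (convexHull ℝ V)).Adj x y ∧ w x < w y := by
  classical
  have hfin : ((convexHull ℝ V).extremePoints ℝ).Finite :=
    hV.subset extremePoints_convexHull_subset
  have hW₀ : convexHull ℝ (hfin.toFinset : Set E) = convexHull ℝ V := by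
    rw [hfin.coe_toFinset, hV.convexHull_extremePoints_convexHull]
  refine exists_polytopeGraph_adj_lt_of_isExtreme w (W := hfin.toFinset) (by simp)
    (by simpa using hx) (by rw [hW₀]) ?_
  by_contra! hle
  exact (w.le_of_mem_convexHull hle (hW₀.symm ▸ hz)).not_gt hwz

theorem exists_walk_isMaxOn {V : Set E} (hV : V.Finite) (g : StrongDual ℝ E)
    (hint : ∀ v ∈ (convexHull ℝ V).extremePoints ℝ, ∃ q : ℤ, g v = q) (B : ℕ) {x : E}
    (hx : x ∈ (convexHull ℝ V).extremePoints ℝ) (hgap : ∀ z ∈ convexHull ℝ V, g z ≤ g x + B) :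
    ∃ y, ∃ p : (polytopeGraph (convexHull ℝ V)).Walk x y,
      p.length ≤ B ∧ IsMaxOn g (convexHull ℝ V) y := by
  induction B generalizing x with
  | zero => exact ⟨x, .nil, le_rfl, fun z hz => by simpa using hgap z hz⟩
  | succ B IH =>
    by_cases hmax : IsMaxOn g (convexHull ℝ V) x
    · exact ⟨x, .nil, Nat.zero_le _, hmax⟩
    obtain ⟨z, hz, hgz⟩ := by simpa [isMaxOn_iff] using hmax
    obtain ⟨y, hadj, hgy⟩ := exists_polytopeGraph_adj_lt hV g hx hz hgz
    have hstep : g x + 1 ≤ g y := by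
      obtain ⟨qx, hqx⟩ := hint x hx
      obtain ⟨qy, hqy⟩ := hint y hadj.2.2.1
      rw [hqx, hqy] at hgy ⊢
      exact_mod_cast Int.add_one_le_of_lt (by exact_mod_cast hgy)
    obtain ⟨y', p, hp, hmax'⟩ := IH hadj.2.2.1 fun z hz => by
      have := hgap z hz; push_cast at this; linarith
    exact ⟨y', .cons hadj p, by simpa using hp, hmax'⟩

end Polytope

theorem Int.abs_ediv_le_one {a b : ℤ} (hb : 0 < b) (h : |a| ≤ b) : |a / b| ≤ 1 := by
  rw [abs_le] at h ⊢
  exact ⟨(Int.le_ediv_iff_mul_le hb).2 (by linarith), Int.ediv_le_of_le_mul hb (by linarith)⟩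

theorem Int.abs_ediv_two_pow_sub_two_mul_le (a : ℤ) (s : ℕ) :
    |a / 2 ^ s - 2 * (a / 2 ^ (s + 1))| ≤ 1 := by
  rw [pow_succ, ← Int.ediv_ediv_of_nonneg (by positivity)]
  generalize a / 2 ^ s = m
  rw [abs_le]
  omega

section Objective

variable {n : ℕ}

def linearObjective (d : Fin n → ℤ) : StrongDual ℝ (Fin n → ℝ) :=
  ∑ j, (d j : ℝ) • ContinuousLinearMap.proj j

@[simp]
theorem linearObjective_apply (d : Fin n → ℤ) (z : Fin n → ℝ) :
    linearObjective d z = ∑ j, (d j : ℝ) * z j := by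
  simp [linearObjective]

theorem linearObjective_exists_int (d : Fin n → ℤ) {v : Fin n → ℝ} (hv : ∀ j, ∃ q : ℤ, v j = q) :
    ∃ q : ℤ, linearObjective d v = q := by
  choose q hq using hv
  exact ⟨∑ j, d j * q j, by simp [hq]⟩

theorem linearObjective_le_add_of_isMaxOn {P : Set (Fin n → ℝ)} {k : ℝ}
    (hbox : ∀ z ∈ P, ∀ j, 0 ≤ z j ∧ z j ≤ k) {d d' : Fin n → ℤ}
    (hd : ∀ j, |d j - 2 * d' j| ≤ 1) {x z : Fin n → ℝ} (hx : x ∈ P)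
    (hmax : IsMaxOn (linearObjective d') P x) (hz : z ∈ P) :
    linearObjective d z ≤ linearObjective d x + n * k := by
  have hsplit : linearObjective d z - linearObjective d x =
      2 * (linearObjective d' z - linearObjective d' x) +
        ∑ j, ((d j - 2 * d' j : ℤ) : ℝ) * (z j - x j) := by
    simp only [linearObjective_apply, ← sum_sub_distrib, mul_sum, ← sum_add_distrib]
    refine sum_congr rfl fun j _ => ?_
    push_cast; ring
  have hcoord : ∀ j, ((d j - 2 * d' j : ℤ) : ℝ) * (z j - x j) ≤ k := fun j => by
    have hzx : |z j - x j| ≤ k := abs_sub_le_iff.2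
      ⟨by linarith [hbox z hz j, hbox x hx j], by linarith [hbox z hz j, hbox x hx j]⟩
    calc ((d j - 2 * d' j : ℤ) : ℝ) * (z j - x j)
        ≤ |((d j - 2 * d' j : ℤ) : ℝ)| * |z j - x j| := (le_abs_self _).trans (abs_mul _ _).le
      _ ≤ 1 * k := mul_le_mul (by exact_mod_cast hd j) hzx (abs_nonneg _) zero_le_one
      _ = k := one_mul k
  have hsum := sum_le_sum fun j (_ : j ∈ Finset.univ) => hcoord j
  simp only [sum_const, card_univ, Fintype.card_fin, nsmul_eq_mul] at hsum
  have hopt : linearObjective d' z ≤ linearObjective d' x := hmax hz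
  linarith

theorem exists_walk_isMaxOn_of_halving {V : Set (Fin n → ℝ)} (hV : V.Finite) {k : ℕ}
    (hbox : ∀ z ∈ convexHull ℝ V, ∀ j, 0 ≤ z j ∧ z j ≤ k)
    (hint : ∀ v ∈ (convexHull ℝ V).extremePoints ℝ, ∀ j, ∃ q : ℤ, v j = q)
    {d d' : Fin n → ℤ} (hd : ∀ j, |d j - 2 * d' j| ≤ 1) {x : Fin n → ℝ}
    (hx : x ∈ (convexHull ℝ V).extremePoints ℝ)
    (hmax : IsMaxOn (linearObjective d') (convexHull ℝ V) x) :
    ∃ y, ∃ p : (polytopeGraph (convexHull ℝ V)).Walk x y,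
      p.length ≤ n * k ∧ IsMaxOn (linearObjective d) (convexHull ℝ V) y :=
  exists_walk_isMaxOn hV _ (fun v hv => linearObjective_exists_int d (hint v hv)) (n * k) hx
    fun _ hz => by
      push_cast
      exact linearObjective_le_add_of_isMaxOn hbox hd (extremePoints_subset hx) hmax hz

theorem exists_walk_isMaxOn_of_scaling {V : Set (Fin n → ℝ)} (hV : V.Finite) {k : ℕ}
    (hbox : ∀ z ∈ convexHull ℝ V, ∀ j, 0 ≤ z j ∧ z j ≤ k)
    (hint : ∀ v ∈ (convexHull ℝ V).extremePoints ℝ, ∀ j, ∃ q : ℤ, v j = q)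
    (T : ℕ) (d : ℕ → Fin n → ℤ) (hT : ∀ j, |d T j| ≤ 1)
    (hd : ∀ s j, |d s j - 2 * d (s + 1) j| ≤ 1) {x : Fin n → ℝ}
    (hx : x ∈ (convexHull ℝ V).extremePoints ℝ) :
    ∃ y, ∃ p : (polytopeGraph (convexHull ℝ V)).Walk x y,
      p.length ≤ (T + 1) * (n * k) ∧ IsMaxOn (linearObjective (d 0)) (convexHull ℝ V) y := by
  induction T generalizing d with
  | zero =>
    obtain ⟨y, p, hp, hy⟩ := exists_walk_isMaxOn_of_halving hV hbox hint (d' := 0)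
      (by simpa using hT) hx fun z _ => by simp
    exact ⟨y, p, by simpa using hp, hy⟩
  | succ T IH =>
    obtain ⟨y, p, hp, hy⟩ := IH (fun s => d (s + 1)) hT fun s => hd (s + 1)
    obtain ⟨y', q, hq, hy'⟩ := exists_walk_isMaxOn_of_halving hV hbox hint (hd 0)
      (polytopeGraph.mem_extremePoints_of_walk p hx) hy
    refine ⟨y', p.append q, ?_, hy'⟩
    rw [SimpleGraph.Walk.length_append]
    linarith

end Objective

theorem short_simplex_path_scaling_general
    (n k : ℕ)
    (P : Set (Fin n → ℝ)) (hP : IsZeroKPolytope n k P)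
    (c : Fin n → ℤ)
    (M : ℕ) (hM : M = Finset.univ.sup fun j => (c j).natAbs)
    (x0 : Fin n → ℝ) (hx0 : IsVertex P x0) :
    ∃ (N : ℕ) (path : Fin (N + 1) → (Fin n → ℝ)),
      path 0 = x0 ∧
      (∀ t, IsVertex P (path t)) ∧
      (∀ t : Fin N, AdjacentVertices P (path t.castSucc) (path t.succ)) ∧
      (∀ x ∈ P, ∑ j, (c j : ℝ) * x j ≤ ∑ j, (c j : ℝ) * path (Fin.last N) j) ∧
      (N : ℤ) ≤ n * k * (⌈Real.logb 2 (M : ℝ)⌉ + 1) := by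
  obtain ⟨⟨V, hV, rfl⟩, hbox, hint⟩ := hP
  set T := Nat.clog 2 M
  have hcT : ∀ j, |c j| ≤ 2 ^ T := fun j => by
    have hcM : (c j).natAbs ≤ M := hM ▸ le_sup (f := fun j => (c j).natAbs) (mem_univ j)
    rw [Int.abs_eq_natAbs]
    exact_mod_cast hcM.trans (Nat.le_pow_clog one_lt_two M)
  obtain ⟨y, p, hp, hy⟩ := exists_walk_isMaxOn_of_scaling hV hbox hint T
    (fun s j => c j / 2 ^ s) (fun j => Int.abs_ediv_le_one (by positivity) (hcT j))
    (fun s j => Int.abs_ediv_two_pow_sub_two_mul_le (c j) s) hx0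
  have hlog : ⌈Real.logb 2 (M : ℝ)⌉ = T := by
    have := Real.ceil_logb_natCast (b := 2) (Nat.cast_nonneg (α := ℝ) M)
    rw [Nat.cast_ofNat] at this
    rw [this, Int.clog_natCast]
  refine ⟨p.length, fun t => p.getVert t, p.getVert_zero, fun t => ?_,
    fun t => p.adj_getVert_succ t.isLt, fun z hz => ?_, ?_⟩
  · exact polytopeGraph.mem_extremePoints_of_walk (p.take t) hx0
  · simpa [p.getVert_length] using hy hz
  · rw [hlog]
    exact_mod_cast hp.trans_eq (by ring)

theorem short_simplex_path_scaling
    (n k : ℕ) (hn : 1 ≤ n) (hk : 1 ≤ k)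
    (P : Set (Fin n → ℝ)) (hP : IsZeroKPolytope n k P)
    (c : Fin n → ℤ) (hc : c ≠ 0)
    (M : ℕ) (hM : M = Finset.univ.sup fun j => (c j).natAbs)
    (x0 : Fin n → ℝ) (hx0 : IsVertex P x0) :
    ∃ (N : ℕ) (path : Fin (N + 1) → (Fin n → ℝ)),
      path 0 = x0 ∧
      (∀ t, IsVertex P (path t)) ∧
      (∀ t : Fin N, AdjacentVertices P (path t.castSucc) (path t.succ)) ∧
      (∀ x ∈ P, ∑ j, (c j : ℝ) * x j ≤ ∑ j, (c j : ℝ) * path (Fin.last N) j) ∧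
      (N : ℤ) ≤ n * k * (⌈Real.logb 2 (M : ℝ)⌉ + 1) :=
  short_simplex_path_scaling_general n k P hP c M hM x0 hx0
end

section
/- Let n, k ≥ 1 be integers, let P ⊆ ℝⁿ be a [0,k]-polytope, let c ∈ ℤⁿ, and let x⁰ be a vertex of P. Then there exists a sequence of vertices x⁰, x¹, …, x^N of P such that consecutive vertices are adjacent, cᵀx^{t+1} > cᵀx^t for every t, x^N maximizes cᵀx over P, and N ≤ n·k·‖c‖_∞. -/
/-! Run the simplex method from `x⁰` with any improving pivot rule. Since `c` and the vertices
are integral, every improving step raises `cᵀx` by at least `1`, while on `[0,k]ⁿ` the value of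
`cᵀx` varies by at most `n k ‖c‖_∞`.

That a non-optimal vertex `v` has an improving edge is shown by induction on the number of
vertices. Tilt a functional `f` exposing `v` towards `c` until a `c`-better vertex ties with `v`:
this exposes a face containing `v` and a better vertex, and if the face is proper we recurse.
Otherwise `f + t c` is constant on `P`, every other vertex is better than `v`, and it suffices to
find any edge at `v`; the same tilting argument, now towards a functional that `f` does not
determine on `P`, finds one unless `P` is a segment. -/

open Set

section Polytope

variable {E : Type*} [NormedAddCommGroup E] [NormedSpace ℝ E]

def IsPolytope (P : Set E) : Prop :=
  ∃ S : Set E, S.Finite ∧ P = convexHull ℝ S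

theorem convexHull_extremePoints_of_finite {P : Set E} (hc : IsCompact P) (hconv : Convex ℝ P)
    (hfin : (extremePoints ℝ P).Finite) : convexHull ℝ (extremePoints ℝ P) = P := by
  have h := closure_convexHull_extremePoints hc hconv
  rwa [(hfin.isClosed_convexHull ℝ).closure_eq] at h

theorem ContinuousLinearMap.eq_of_toExposed_eq {P : Set E} {l : E →L[ℝ] ℝ}
    (hl : l.toExposed P = P) {x y : E} (hx : x ∈ P) (hy : y ∈ P) : l x = l y :=
  le_antisymm ((hl.symm ▸ hy : y ∈ l.toExposed P).2 x hx)
    ((hl.symm ▸ hx : x ∈ l.toExposed P).2 y hy)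

namespace IsPolytope

variable {P F : Set E} {v : E}

theorem isCompact (hP : IsPolytope P) : IsCompact P := by
  obtain ⟨S, hS, rfl⟩ := hP
  exact hS.isCompact_convexHull ℝ

theorem convex (hP : IsPolytope P) : Convex ℝ P := by
  obtain ⟨S, -, rfl⟩ := hP
  exact convex_convexHull ℝ S

theorem finite_extremePoints (hP : IsPolytope P) : (extremePoints ℝ P).Finite := by
  obtain ⟨S, hS, rfl⟩ := hP
  exact hS.subset extremePoints_convexHull_subset

theorem convexHull_extremePoints (hP : IsPolytope P) :
    convexHull ℝ (extremePoints ℝ P) = P :=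
  convexHull_extremePoints_of_finite hP.isCompact hP.convex hP.finite_extremePoints

theorem of_isExposed (hP : IsPolytope P) (hF : IsExposed ℝ P F) : IsPolytope F :=
  ⟨extremePoints ℝ F,
    hP.finite_extremePoints.subset hF.isExtreme.extremePoints_subset_extremePoints,
    (convexHull_extremePoints_of_finite (hF.isCompact hP.isCompact) (hF.convex hP.convex)
      (hP.finite_extremePoints.subset hF.isExtreme.extremePoints_subset_extremePoints)).symm⟩

theorem ncard_extremePoints_lt (hP : IsPolytope P) (hF : IsExposed ℝ P F) (hFP : F ≠ P) :
    (extremePoints ℝ F).ncard < (extremePoints ℝ P).ncard := by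
  refine ncard_lt_ncard ⟨hF.isExtreme.extremePoints_subset_extremePoints, fun hsub => hFP ?_⟩
    hP.finite_extremePoints
  rw [← (hP.of_isExposed hF).convexHull_extremePoints, ← hP.convexHull_extremePoints,
    hF.isExtreme.extremePoints_subset_extremePoints.antisymm hsub]

theorem le_of_forall_extremePoints_le (hP : IsPolytope P) (l : E →L[ℝ] ℝ) {r : ℝ}
    (h : ∀ w ∈ extremePoints ℝ P, l w ≤ r) {x : E} (hx : x ∈ P) : l x ≤ r := by
  rw [← hP.convexHull_extremePoints] at hx
  exact convexHull_min h (convex_halfSpace_le l.toLinearMap.isLinear r) hx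

theorem exists_extremePoint_lt (hP : IsPolytope P) (l : E →L[ℝ] ℝ) {r : ℝ} {x : E}
    (hx : x ∈ P) (hlt : r < l x) : ∃ w ∈ extremePoints ℝ P, r < l w := by
  by_contra! h
  exact (hP.le_of_forall_extremePoints_le l h hx).not_gt hlt

theorem exists_forall_extremePoints_lt (hP : IsPolytope P) (hv : v ∈ extremePoints ℝ P) :
    ∃ f : E →L[ℝ] ℝ, ∀ w ∈ extremePoints ℝ P, w ≠ v → f w < f v := by
  set S := extremePoints ℝ P \ {v}
  have hvS : v ∉ convexHull ℝ S := fun hvS =>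
    (extremePoints_convexHull_subset
      (inter_extremePoints_subset_extremePoints_of_subset
        (hP.convexHull_extremePoints ▸ convexHull_mono sdiff_subset) ⟨hvS, hv⟩)).2 rfl
  obtain ⟨f, u, hfu, huv⟩ := geometric_hahn_banach_closed_point (convex_convexHull ℝ S)
    ((hP.finite_extremePoints.subset sdiff_subset).isClosed_convexHull ℝ) hvS
  exact ⟨f, fun w hw hwv => (hfu w (subset_convexHull ℝ S ⟨hw, hwv⟩)).trans huv⟩

/-- The pivot of the simplex method: tilting `f` towards `h` by the smallest ratio at which a new
vertex ties with `v` keeps `v` optimal and exposes a face with an `h`-better vertex. -/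
theorem exists_pos_mem_toExposed (hP : IsPolytope P) {f h : E →L[ℝ] ℝ} (hv : v ∈ P)
    (hsep : ∀ w ∈ extremePoints ℝ P, w ≠ v → f w < f v) {w₁ : E}
    (hw₁ : w₁ ∈ extremePoints ℝ P) (hlt : h v < h w₁) :
    ∃ t : ℝ, 0 < t ∧ v ∈ (f + t • h).toExposed P ∧
      ∃ w ∈ extremePoints ℝ P, h v < h w ∧ w ∈ (f + t • h).toExposed P := by
  set ratio : E → ℝ := fun w => (f v - f w) / (h w - h v)
  obtain ⟨w, ⟨hw, hvw⟩, hmin⟩ := exists_min_image {w ∈ extremePoints ℝ P | h v < h w} ratio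
    (hP.finite_extremePoints.subset (sep_subset _ _)) ⟨w₁, hw₁, hlt⟩
  have hfw : f w < f v := hsep w hw (by rintro rfl; exact hvw.false)
  have htpos : 0 < ratio w := div_pos (sub_pos.2 hfw) (sub_pos.2 hvw)
  set G := f + ratio w • h
  have hG : ∀ x, G x = f x + ratio w * h x := fun x => rfl
  have hGle : ∀ u ∈ extremePoints ℝ P, G u ≤ G v := by
    intro u hu
    rw [hG, hG]
    rcases eq_or_ne u v with rfl | huv
    · rfl
    rcases le_or_gt (h u) (h v) with hle | hgt
    · nlinarith [hsep u hu huv]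
    · have := (le_div_iff₀ (sub_pos.2 hgt)).1 (hmin u ⟨hu, hgt⟩)
      linarith
  have hGw : G w = G v := by
    rw [hG, hG, show ratio w = (f v - f w) / (h w - h v) from rfl]
    field_simp [(sub_pos.2 hvw).ne']
    ring
  refine ⟨ratio w, htpos, ⟨hv, fun y hy => hP.le_of_forall_extremePoints_le G hGle hy⟩,
    w, hw, hvw, hw.1, fun y hy => hGw ▸ hP.le_of_forall_extremePoints_le G hGle hy⟩

theorem exists_apply_ne_and_extremePoint_lt (hP : IsPolytope P) {x y : E} (hx : x ∈ P)
    (hy : y ∈ P) (hxy : x ≠ y) (v : E) :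
    ∃ σ : E →L[ℝ] ℝ, σ x ≠ σ y ∧ ∃ u ∈ extremePoints ℝ P, σ v < σ u := by
  obtain ⟨σ, hσ⟩ := SeparatingDual.exists_separating_of_ne (R := ℝ) hxy
  obtain ⟨z, hz, hzv⟩ : ∃ z ∈ P, σ z ≠ σ v := by
    by_contra! h
    exact hσ ((h x hx).trans (h y hy).symm)
  rcases hzv.lt_or_gt with hlt | hgt
  · obtain ⟨u, hu, hvu⟩ := hP.exists_extremePoint_lt (-σ) (r := (-σ) v) hz (by simpa using hlt)
    exact ⟨-σ, by simpa using hσ, u, hu, hvu⟩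
  · obtain ⟨u, hu, hvu⟩ := hP.exists_extremePoint_lt σ hz hgt
    exact ⟨σ, hσ, u, hu, hvu⟩

theorem exists_isExtreme_segment (hP : IsPolytope P) (hv : v ∈ extremePoints ℝ P) {w₀ : E}
    (hw₀ : w₀ ∈ extremePoints ℝ P) (hw₀v : w₀ ≠ v) :
    ∃ w ∈ extremePoints ℝ P, w ≠ v ∧ IsExtreme ℝ P (segment ℝ v w) := by
  induction hm : (extremePoints ℝ P).ncard using Nat.strong_induction_on generalizing P w₀ with
  | _ m ih =>
  obtain ⟨f, hsep⟩ := hP.exists_forall_extremePoints_lt hv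
  obtain ⟨w, ⟨hw, hwv⟩, hwmin⟩ := exists_min_image (extremePoints ℝ P \ {v}) f
    (hP.finite_extremePoints.subset sdiff_subset) ⟨w₀, hw₀, hw₀v⟩
  by_cases hsub : extremePoints ℝ P ⊆ {v, w}
  · refine ⟨w, hw, hwv, ?_⟩
    rw [← convexHull_pair, ← hsub.antisymm (insert_subset hv (singleton_subset_iff.2 hw)),
      hP.convexHull_extremePoints]
  obtain ⟨e, he, hev, hew⟩ : ∃ e ∈ extremePoints ℝ P, e ≠ v ∧ e ≠ w := by
    simpa [subset_def, not_or] using hsub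
  -- `[v, w]` meets the `f`-level of `e` in a point `p ≠ e`, so pivoting towards a `σ` that
  -- separates `e` from `p` cannot expose all of `P`
  obtain ⟨p, hpseg, hfp⟩ : f e ∈ f '' segment ℝ v w := by
    have himage := image_segment ℝ f.toLinearMap.toAffineMap v w
    simp only [LinearMap.coe_toAffineMap, ContinuousLinearMap.coe_coe] at himage
    rw [himage, segment_symm, segment_eq_Icc (hsep w hw hwv).le]
    exact ⟨hwmin e ⟨he, hev⟩, (hsep e he hev).le⟩
  have hpP : p ∈ P := hP.convex.segment_subset hv.1 hw.1 hpseg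
  have hpe : p ≠ e := fun hpe => hev (he.2 hv.1 hw.1
    (mem_openSegment_of_ne_left_right hev.symm hew.symm (hpe ▸ hpseg))).symm
  obtain ⟨σ, hσ, u, hu, hσu⟩ :=
    hP.exists_apply_ne_and_extremePoint_lt hpP he.1 hpe v
  obtain ⟨t, ht, hvF, w', hw', hσw', hw'F⟩ := hP.exists_pos_mem_toExposed hv.1 hsep hu hσu
  have hF : IsExposed ℝ P ((f + t • σ).toExposed P) := ContinuousLinearMap.toExposed.isExposed
  have hFP : (f + t • σ).toExposed P ≠ P := fun hFP => by
    have hpe' := ContinuousLinearMap.eq_of_toExposed_eq hFP hpP he.1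
    simp only [add_apply, smul_apply, smul_eq_mul, hfp, add_right_inj,
      mul_right_inj' ht.ne'] at hpe'
    exact hσ hpe'
  obtain ⟨a, ha, hav, hseg⟩ := ih _ (hm ▸ hP.ncard_extremePoints_lt hF hFP) (hP.of_isExposed hF)
    (inter_extremePoints_subset_extremePoints_of_subset hF.subset ⟨hvF, hv⟩)
    (inter_extremePoints_subset_extremePoints_of_subset hF.subset ⟨hw'F, hw'⟩)
    (by rintro rfl; exact hσw'.false) rfl
  exact ⟨a, hF.isExtreme.extremePoints_subset_extremePoints ha, hav, hF.isExtreme.trans hseg⟩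

theorem exists_isExtreme_segment_lt (hP : IsPolytope P) (hv : v ∈ extremePoints ℝ P)
    (g : E →L[ℝ] ℝ) {x : E} (hx : x ∈ P) (hlt : g v < g x) :
    ∃ w ∈ extremePoints ℝ P, g v < g w ∧ IsExtreme ℝ P (segment ℝ v w) := by
  induction hm : (extremePoints ℝ P).ncard using Nat.strong_induction_on generalizing P x with
  | _ m ih =>
  obtain ⟨f, hsep⟩ := hP.exists_forall_extremePoints_lt hv
  obtain ⟨w₁, hw₁, hlt₁⟩ := hP.exists_extremePoint_lt g hx hlt
  obtain ⟨t, ht, hvF, w', hw', hgw', hw'F⟩ := hP.exists_pos_mem_toExposed hv.1 hsep hw₁ hlt₁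
  have hF : IsExposed ℝ P ((f + t • g).toExposed P) := ContinuousLinearMap.toExposed.isExposed
  by_cases hFP : (f + t • g).toExposed P = P
  · obtain ⟨w, hw, hwv, hseg⟩ :=
      hP.exists_isExtreme_segment hv hw' (by rintro rfl; exact hgw'.false)
    refine ⟨w, hw, ?_, hseg⟩
    have hwv' := ContinuousLinearMap.eq_of_toExposed_eq hFP hw.1 hv.1
    simp only [add_apply, smul_apply, smul_eq_mul] at hwv'
    nlinarith [hsep w hw hwv]
  obtain ⟨w, hw, hgw, hseg⟩ := ih _ (hm ▸ hP.ncard_extremePoints_lt hF hFP) (hP.of_isExposed hF)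
    (inter_extremePoints_subset_extremePoints_of_subset hF.subset ⟨hvF, hv⟩) hw'F hgw' rfl
  exact ⟨w, hF.isExtreme.extremePoints_subset_extremePoints hw, hgw, hF.isExtreme.trans hseg⟩

end IsPolytope

def IsMonotoneEdgePath (P : Set E) (g : E →L[ℝ] ℝ) {N : ℕ} (path : Fin (N + 1) → E) : Prop :=
  (∀ t, path t ∈ extremePoints ℝ P) ∧
    ∀ t : Fin N, g (path t.castSucc) < g (path t.succ) ∧
      IsExtreme ℝ P (segment ℝ (path t.castSucc) (path t.succ))

theorem IsMonotoneEdgePath.cons {P : Set E} {g : E →L[ℝ] ℝ} {N : ℕ} {path : Fin (N + 1) → E}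
    (hpath : IsMonotoneEdgePath P g path) {v : E} (hv : v ∈ extremePoints ℝ P)
    (hlt : g v < g (path 0)) (hseg : IsExtreme ℝ P (segment ℝ v (path 0))) :
    IsMonotoneEdgePath P g (Fin.cons v path : Fin (N + 2) → E) :=
  ⟨Fin.cases hv fun t => by simpa using hpath.1 t,
    Fin.cases ⟨by simpa using hlt, by simpa using hseg⟩ fun t => by
      simpa [← Fin.succ_castSucc] using hpath.2 t⟩

theorem IsPolytope.exists_isMonotoneEdgePath {P : Set E} (hP : IsPolytope P) (g : E →L[ℝ] ℝ)
    (hint : ∀ w ∈ extremePoints ℝ P, ∃ z : ℤ, g w = z) (b : ℕ) {v : E}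
    (hv : v ∈ extremePoints ℝ P) (hgap : ∀ x ∈ P, g x ≤ g v + b) :
    ∃ N ≤ b, ∃ path : Fin (N + 1) → E, path 0 = v ∧ IsMonotoneEdgePath P g path ∧
      ∀ x ∈ P, g x ≤ g (path (Fin.last N)) := by
  induction b generalizing v with
  | zero => exact ⟨0, le_rfl, fun _ => v, rfl, ⟨fun _ => hv, Fin.elim0⟩, by simpa using hgap⟩
  | succ b ih =>
  by_cases hopt : ∀ x ∈ P, g x ≤ g v
  · exact ⟨0, (b + 1).zero_le, fun _ => v, rfl, ⟨fun _ => hv, Fin.elim0⟩, hopt⟩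
  obtain ⟨x, hx, hlt⟩ : ∃ x ∈ P, g v < g x := by simpa using hopt
  obtain ⟨w, hw, hvw, hseg⟩ := hP.exists_isExtreme_segment_lt hv g hx hlt
  have hstep : g v + 1 ≤ g w := by
    obtain ⟨zv, hzv⟩ := hint v hv
    obtain ⟨zw, hzw⟩ := hint w hw
    rw [hzv, hzw] at hvw ⊢
    exact_mod_cast Int.cast_lt.1 hvw
  obtain ⟨N, hN, path, rfl, hpath, hlast⟩ :=
    ih hw fun y hy => by linarith [hgap y hy, show ((b + 1 : ℕ) : ℝ) = b + 1 by push_cast; ring]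
  exact ⟨N + 1, by omega, Fin.cons v path, rfl, hpath.cons hv hvw hseg,
    by simpa [← Fin.succ_last] using hlast⟩

end Polytope

theorem sum_mul_le_sum_mul_add {ι : Type*} [Fintype ι] {c x y : ι → ℝ} {k M : ℝ}
    (hc : ∀ j, |c j| ≤ M) (hxy : ∀ j, |x j - y j| ≤ k) :
    ∑ j, c j * x j ≤ ∑ j, c j * y j + Fintype.card ι * k * M := by
  have hterm : ∀ j, c j * x j - c j * y j ≤ k * M := fun j => by
    rw [← mul_sub, mul_comm k]
    exact (le_abs_self _).trans (abs_mul (c j) _ ▸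
      mul_le_mul (hc j) (hxy j) (abs_nonneg _) ((abs_nonneg _).trans (hc j)))
  have := Finset.sum_le_sum fun j (_ : j ∈ Finset.univ) => hterm j
  simp only [Finset.sum_sub_distrib, Finset.sum_const, Finset.card_univ, nsmul_eq_mul] at this
  linarith

theorem short_simplex_path_basic_general
    (n k : ℕ)
    (P : Set (Fin n → ℝ)) (hP : IsZeroKPolytope n k P)
    (c : Fin n → ℤ)
    (M : ℕ) (hM : M = Finset.univ.sup fun j => (c j).natAbs)
    (x0 : Fin n → ℝ) (hx0 : IsVertex P x0) :
    ∃ (N : ℕ) (path : Fin (N + 1) → (Fin n → ℝ)),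
      path 0 = x0 ∧
      (∀ t, IsVertex P (path t)) ∧
      (∀ t : Fin N, AdjacentVertices P (path t.castSucc) (path t.succ)) ∧
      (∀ t : Fin N,
        ∑ j, (c j : ℝ) * path t.castSucc j < ∑ j, (c j : ℝ) * path t.succ j) ∧
      (∀ x ∈ P, ∑ j, (c j : ℝ) * x j ≤ ∑ j, (c j : ℝ) * path (Fin.last N) j) ∧
      N ≤ n * k * M := by
  obtain ⟨⟨V, hV, hPV⟩, hbox, hint⟩ := hP
  set g : (Fin n → ℝ) →L[ℝ] ℝ := ∑ j, (c j : ℝ) • ContinuousLinearMap.proj j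
  have hg : ∀ x, g x = ∑ j, (c j : ℝ) * x j := fun x => by simp [g]
  have hgint : ∀ w ∈ extremePoints ℝ P, ∃ z : ℤ, g w = z := fun w hw => by
    choose z hz using hint w hw
    exact ⟨∑ j, c j * z j, by simp [hg, hz]⟩
  have hgap : ∀ x ∈ P, g x ≤ g x0 + (n * k * M : ℕ) := fun x hx => by
    have hcM : ∀ j, |(c j : ℝ)| ≤ M := fun j => by
      rw [← Int.cast_abs, Int.abs_eq_natAbs, hM]
      exact_mod_cast Finset.le_sup (f := fun j => (c j).natAbs) (Finset.mem_univ j)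
    have hdist : ∀ j, |x j - x0 j| ≤ k := fun j => by
      have := hbox x hx j
      have := hbox x0 hx0.1 j
      exact abs_sub_le_iff.2 ⟨by linarith, by linarith⟩
    simpa [hg] using sum_mul_le_sum_mul_add hcM hdist
  obtain ⟨N, hN, path, h0, ⟨hvert, hedge⟩, hlast⟩ :=
    IsPolytope.exists_isMonotoneEdgePath ⟨V, hV, hPV⟩ g hgint _ hx0 hgap
  refine ⟨N, path, h0, hvert, fun t => ?_, fun t => ?_, fun x hx => ?_, hN⟩
  · obtain ⟨hlt, hseg⟩ := hedge t
    exact ⟨fun heq => hlt.ne (congrArg g heq), hvert _, hvert _, hseg⟩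
  · simpa only [hg] using (hedge t).1
  · simpa only [hg] using hlast x hx

theorem short_simplex_path_basic
    (n k : ℕ) (hn : 1 ≤ n) (hk : 1 ≤ k)
    (P : Set (Fin n → ℝ)) (hP : IsZeroKPolytope n k P)
    (c : Fin n → ℤ)
    (M : ℕ) (hM : M = Finset.univ.sup fun j => (c j).natAbs)
    (x0 : Fin n → ℝ) (hx0 : IsVertex P x0) :
    ∃ (N : ℕ) (path : Fin (N + 1) → (Fin n → ℝ)),
      path 0 = x0 ∧
      (∀ t, IsVertex P (path t)) ∧
      (∀ t : Fin N, AdjacentVertices P (path t.castSucc) (path t.succ)) ∧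
      (∀ t : Fin N,
        ∑ j, (c j : ℝ) * path t.castSucc j < ∑ j, (c j : ℝ) * path t.succ j) ∧
      (∀ x ∈ P, ∑ j, (c j : ℝ) * x j ≤ ∑ j, (c j : ℝ) * path (Fin.last N) j) ∧
      N ≤ n * k * M :=
  short_simplex_path_basic_general n k P hP c M hM x0 hx0
end

section
/- Let n, k ≥ 1 be integers and let P = conv(V) where V ⊆ ℤⁿ ∩ [0,k]ⁿ is finite and nonempty. Let c, c̆ ∈ ℤⁿ be such that sign(cᵀz) = sign(c̆ᵀz) for every z ∈ ℤⁿ with ‖z‖₁ ≤ nk. If x* ∈ V satisfies c̆ᵀx* ≥ c̆ᵀx for all x ∈ P, then x* also satisfies cᵀx* ≥ cᵀx for all x ∈ P. -/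
/-!
The sign condition applies to the difference `xs - v` of any two points of `V`, whose
`ℓ₁`-norm is at most `n k` because both lie in the box `[0, k]ⁿ`. Hence `c` ranks the points of
`V` exactly as `c̆` does, so `xs` maximises `c` over `V`; a linear functional bounded on `V` is
bounded by the same constant on `conv V = P`.
-/

open Finset Matrix

variable {ι : Type*} [Fintype ι]

lemma sum_abs_sub_le_card_mul {k : ℤ} {x y : ι → ℤ}
    (hx : ∀ j, 0 ≤ x j ∧ x j ≤ k) (hy : ∀ j, 0 ≤ y j ∧ y j ≤ k) :
    ∑ j, |x j - y j| ≤ Fintype.card ι * k := by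
  calc ∑ j, |x j - y j| ≤ ∑ _j : ι, k :=
        sum_le_sum fun j _ => abs_sub_le_iff.2 ⟨by linarith [hx j, hy j], by linarith [hx j, hy j]⟩
    _ = Fintype.card ι * k := by simp

lemma dotProduct_le_of_sign_eq {c c' v w : ι → ℤ}
    (hsign : Int.sign (c ⬝ᵥ (w - v)) = Int.sign (c' ⬝ᵥ (w - v))) (hle : c' ⬝ᵥ v ≤ c' ⬝ᵥ w) :
    c ⬝ᵥ v ≤ c ⬝ᵥ w := by
  have hc' : 0 ≤ c' ⬝ᵥ (w - v) := by rw [dotProduct_sub]; linarith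
  have hc : 0 ≤ c ⬝ᵥ (w - v) := by
    rwa [← Int.sign_nonneg_iff, hsign, Int.sign_nonneg_iff]
  rw [dotProduct_sub] at hc
  linarith

lemma dotProduct_le_of_mem_convexHull {a : ι → ℝ} {b : ℝ} {S : Set (ι → ℝ)}
    (hS : ∀ v ∈ S, a ⬝ᵥ v ≤ b) {x : ι → ℝ} (hx : x ∈ convexHull ℝ S) : a ⬝ᵥ x ≤ b :=
  convexHull_min hS (convex_halfSpace_le ⟨dotProduct_add a, fun r v => dotProduct_smul r a v⟩ b) hx

theorem preprocessing_preserves_optimality_general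
    (n k : ℕ)
    (V : Set (Fin n → ℤ))
    (hVbox : ∀ v ∈ V, ∀ j, 0 ≤ v j ∧ v j ≤ (k : ℤ))
    (c cb : Fin n → ℤ)
    (hsign : ∀ z : Fin n → ℤ, (∑ j, |z j|) ≤ (n : ℤ) * k →
      Int.sign (∑ j, c j * z j) = Int.sign (∑ j, cb j * z j))
    (P : Set (Fin n → ℝ))
    (hP : P = convexHull ℝ ((fun v : Fin n → ℤ => fun j => (v j : ℝ)) '' V))
    (xs : Fin n → ℤ) (hxs : xs ∈ V)
    (hopt : ∀ x ∈ P, ∑ j, (cb j : ℝ) * x j ≤ ∑ j, (cb j : ℝ) * (xs j : ℝ)) :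
    ∀ x ∈ P, ∑ j, (c j : ℝ) * x j ≤ ∑ j, (c j : ℝ) * (xs j : ℝ) := by
  subst hP
  intro x hx
  refine dotProduct_le_of_mem_convexHull ?_ hx
  rintro _ ⟨v, hv, rfl⟩
  have hcb : cb ⬝ᵥ v ≤ cb ⬝ᵥ xs := by
    have h := hopt _ (subset_convexHull ℝ _ ⟨v, hv, rfl⟩)
    beta_reduce at h
    exact_mod_cast h
  have hdist : ∑ j, |(xs - v) j| ≤ (n : ℤ) * k := by
    simpa using sum_abs_sub_le_card_mul (hVbox xs hxs) (hVbox v hv)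
  simp only [dotProduct]
  exact_mod_cast dotProduct_le_of_sign_eq (hsign _ hdist) hcb

theorem preprocessing_preserves_optimality
    (n k : ℕ) (hn : 1 ≤ n) (hk : 1 ≤ k)
    (V : Set (Fin n → ℤ)) (hVfin : V.Finite) (hVne : V.Nonempty)
    (hVbox : ∀ v ∈ V, ∀ j, 0 ≤ v j ∧ v j ≤ (k : ℤ))
    (c cb : Fin n → ℤ)
    (hsign : ∀ z : Fin n → ℤ, (∑ j, |z j|) ≤ (n : ℤ) * k →
      Int.sign (∑ j, c j * z j) = Int.sign (∑ j, cb j * z j))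
    (P : Set (Fin n → ℝ))
    (hP : P = convexHull ℝ ((fun v : Fin n → ℤ => fun j => (v j : ℝ)) '' V))
    (xs : Fin n → ℤ) (hxs : xs ∈ V)
    (hopt : ∀ x ∈ P, ∑ j, (cb j : ℝ) * x j ≤ ∑ j, (cb j : ℝ) * (xs j : ℝ)) :
    ∀ x ∈ P, ∑ j, (c j : ℝ) * x j ≤ ∑ j, (c j : ℝ) * (xs j : ℝ) :=
  preprocessing_preserves_optimality_general n k V hVbox c cb hsign P hP xs hxs hopt
end

section
/- Let A ∈ ℤ^{m×n} with rows a₁, …, a_m, let b ∈ ℤ^m, let E ⊆ {1,…,m}, and let c̃ ∈ ℤⁿ. Suppose the feasible region F = {x ∈ ℝⁿ ∣ aᵢᵀx = bᵢ for i ∈ E, aᵢᵀx ≤ bᵢ for i ∉ E} is nonempty and bounded, so that the maximum μ = max{ c̃ᵀx ∣ x ∈ F } exists. Then there exists ỹ ∈ ℝ^m such that: Aᵀỹ = c̃; ỹᵢ ≥ 0 for every i ∉ E; bᵀỹ = μ; ỹ has at most n nonzero components; and ỹ_j = 0 for every j ∉ E such that a_j is a linear combination of the vectors aᵢ, i ∈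 E. -/
/-! At a maximiser `x`, Farkas' lemma (finitely generated cones are closed, by Carathéodory's
theorem) writes `c̃` as a combination of the constraints tight at `x`, nonnegative off `E`;
complementary slackness then gives `bᵀy = μ`. To make `y` sparse, apply Carathéodory's theorem
modulo `W = span {aᵢ | i ∈ E}` to the inequality part: the surviving `aᵢ` are independent modulo
`W`, so there are at most `n - dim W` of them and none lies in `W`. The remainder lies in `W` and is
written in a basis of `W` chosen among the `aᵢ`, `i ∈ E`. -/

open Function Set Module Submodule

section Caratheodory

variable {𝕜 M ι : Type*} [Field 𝕜] [LinearOrder 𝕜] [IsStrictOrderedRing 𝕜]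
  [AddCommGroup M] [Module 𝕜 M] [Fintype ι]

theorem exists_sum_smul_eq_zero_of_not_linearIndepOn {v : ι → M} {s : Set ι}
    (h : ¬LinearIndepOn 𝕜 v s) :
    ∃ g : ι → 𝕜, support g ⊆ s ∧ ∑ i, g i • v i = 0 ∧ ∃ i, 0 < g i := by
  obtain ⟨l, hls, hl0, hl⟩ := linearDepOn_iff'.1 h
  have hsum : ∑ i, l i • v i = 0 := by
    rw [← hl0, Finsupp.linearCombination_apply, Finsupp.sum_fintype]
    simp
  obtain ⟨i, hi⟩ : ∃ i, l i ≠ 0 := by simpa [Finsupp.ext_iff] using hl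
  have hsupp : support l ⊆ s := by simpa [Finsupp.mem_supported] using hls
  rcases hi.lt_or_gt with hneg | hpos
  · refine ⟨-l, by simpa using hsupp, by simp [hsum], i, by simpa using hneg⟩
  · exact ⟨l, hsupp, hsum, i, hpos⟩

/-- Subtracting the largest multiple of a linear dependence that keeps the coefficients
nonnegative kills at least one of them. -/
theorem exists_nonneg_sum_smul_eq_of_not_linearIndepOn {v : ι → M} {y : ι → 𝕜} (hy : 0 ≤ y)
    (h : ¬LinearIndepOn 𝕜 v (support y)) :
    ∃ z : ι → 𝕜, 0 ≤ z ∧ support z ⊂ support y ∧ ∑ i, z i • v i = ∑ i, y i • v i := by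
  classical
  obtain ⟨g, hgy, hg0, i₁, hi₁⟩ := exists_sum_smul_eq_zero_of_not_linearIndepOn h
  obtain ⟨i₀, hi₀, hmin⟩ := Finset.exists_min_image {i | 0 < g i} (fun i => y i / g i)
    ⟨i₁, by simpa using hi₁⟩
  simp only [Finset.mem_filter, Finset.mem_univ, true_and] at hi₀ hmin
  set t := y i₀ / g i₀
  have ht : 0 ≤ t := div_nonneg (hy i₀) hi₀.le
  refine ⟨y - t • g, fun i => ?_, ?_, ?_⟩
  · rcases le_or_gt (g i) 0 with hg | hg
    · simpa using (hy i).trans (le_sub_self_iff _ |>.2 (mul_nonpos_of_nonneg_of_nonpos ht hg))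
    · simpa [sub_nonneg] using (le_div_iff₀ hg).1 (hmin i hg)
  · refine ssubset_of_subset_of_ne (fun i hi => ?_) fun heq => ?_
    · by_contra hyi
      exact hi (by simp [notMem_support.1 hyi, notMem_support.1 (mt (@hgy i) hyi)])
    · have : i₀ ∈ support (y - t • g) := heq ▸ hgy (mem_support.2 hi₀.ne')
      exact this (by simp [t, div_mul_cancel₀ _ hi₀.ne'])
  · simp [sub_smul, mul_smul, Finset.sum_sub_distrib, ← Finset.smul_sum, hg0]

theorem exists_nonneg_sum_smul_eq_linearIndepOn (v : ι → M) {y : ι → 𝕜} (hy : 0 ≤ y) :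
    ∃ z : ι → 𝕜, 0 ≤ z ∧ support z ⊆ support y ∧ ∑ i, z i • v i = ∑ i, y i • v i ∧
      LinearIndepOn 𝕜 v (support z) := by
  induction hn : (support y).ncard using Nat.strong_induction_on generalizing y with
  | _ n ih =>
    by_cases h : LinearIndepOn 𝕜 v (support y)
    · exact ⟨y, hy, subset_rfl, rfl, h⟩
    obtain ⟨z, hz, hzy, hsum⟩ := exists_nonneg_sum_smul_eq_of_not_linearIndepOn hy h
    obtain ⟨w, hw, hwz, hwsum, hwli⟩ := ih _ (hn ▸ ncard_lt_ncard hzy) hz rfl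
    exact ⟨w, hw, hwz.trans hzy.subset, hwsum.trans hsum, hwli⟩

end Caratheodory

section SpanImage

variable {K M ι : Type*} [DivisionRing K] [AddCommGroup M] [Module K M]

theorem LinearIndepOn.finrank_span_image_eq_ncard [Finite ι] {v : ι → M} {s : Set ι}
    (h : LinearIndepOn K v s) : finrank K (span K (v '' s)) = s.ncard := by
  have := Fintype.ofFinite s
  rw [image_eq_range, finrank_span_eq_card h, ← Nat.card_eq_fintype_card, Nat.card_coe_set_eq]

theorem exists_sum_smul_eq_of_mem_span_image [Fintype ι] {a : ι → M} {E : Set ι} {w : M}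
    (hw : w ∈ span K (a '' E)) :
    ∃ l : ι → K, support l ⊆ E ∧ (support l).ncard ≤ finrank K (span K (a '' E)) ∧
      ∑ i, l i • a i = w := by
  obtain ⟨B, hBE, -, hEB, hB⟩ := exists_linearIndepOn_extension (linearIndepOn_empty K a)
    (empty_subset E)
  have hspan : span K (a '' B) = span K (a '' E) :=
    le_antisymm (span_mono (image_mono hBE)) (span_le.2 hEB)
  obtain ⟨l, hlB, rfl⟩ := (Finsupp.mem_span_image_iff_linearCombination K).1 (hspan ▸ hw)
  have hsupp : support l ⊆ B := by simpa [Finsupp.mem_supported] using hlB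
  refine ⟨l, hsupp.trans hBE, ?_, ?_⟩
  · rw [← hspan, hB.finrank_span_image_eq_ncard]
    exact ncard_le_ncard hsupp
  · simp [Finsupp.linearCombination_apply, Finsupp.sum_fintype]

end SpanImage

section Sparse

variable {𝕜 M ι : Type*} [Field 𝕜] [LinearOrder 𝕜] [IsStrictOrderedRing 𝕜]
  [AddCommGroup M] [Module 𝕜 M] [Fintype ι]

theorem exists_nonneg_sum_smul_sub_mem_span (a : ι → M) (E : Set ι) {y : ι → 𝕜}
    (hy : ∀ i ∉ E, 0 ≤ y i) :
    ∃ z : ι → 𝕜, 0 ≤ z ∧ support z ⊆ support y \ E ∧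
      ∑ i, y i • a i - ∑ i, z i • a i ∈ span 𝕜 (a '' E) ∧
      LinearIndepOn 𝕜 ((span 𝕜 (a '' E)).mkQ ∘ a) (support z) := by
  classical
  set q := (span 𝕜 (a '' E)).mkQ
  obtain ⟨z, hz, hzy, hsum, hli⟩ := exists_nonneg_sum_smul_eq_linearIndepOn (q ∘ a)
    (y := Eᶜ.indicator y) fun i => by by_cases hi : i ∈ E <;> simp [hi, hy i]
  refine ⟨z, hz, ?_, ?_, hli⟩
  · rw [support_indicator] at hzy
    exact fun i hi => ⟨(hzy hi).2, (hzy hi).1⟩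
  · rw [← Submodule.Quotient.mk_eq_zero, ← mkQ_apply, map_sub, map_sum, map_sum]
    simp only [map_smul, comp_apply] at hsum ⊢
    rw [hsum, sub_eq_zero]
    refine Finset.sum_congr rfl fun i _ => ?_
    by_cases hi : i ∈ E
    · simp [hi, q, (Submodule.Quotient.mk_eq_zero _).2 (subset_span (mem_image_of_mem a hi))]
    · simp [hi, q]

theorem exists_sparse_sum_smul_eq [FiniteDimensional 𝕜 M] (a : ι → M) (E : Set ι) {y : ι → 𝕜}
    (hy : ∀ i ∉ E, 0 ≤ y i) :
    ∃ y' : ι → 𝕜, ∑ i, y' i • a i = ∑ i, y i • a i ∧ (∀ i ∉ E, 0 ≤ y' i) ∧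
      support y' ⊆ E ∪ support y ∧ (support y').ncard ≤ finrank 𝕜 M ∧
      ∀ j ∉ E, a j ∈ span 𝕜 (a '' E) → y' j = 0 := by
  set W := span 𝕜 (a '' E)
  obtain ⟨z, hz, hzy, hW, hli⟩ := exists_nonneg_sum_smul_sub_mem_span a E hy
  obtain ⟨l, hlE, hlcard, hl⟩ := exists_sum_smul_eq_of_mem_span_image hW
  have hlE' : ∀ i ∉ E, l i = 0 := fun i hi => notMem_support.1 fun h => hi (hlE h)
  refine ⟨l + z, ?_, fun i hi => by simpa [hlE' i hi] using hz i, ?_, ?_, fun j hj hjW => ?_⟩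
  · simp [add_smul, Finset.sum_add_distrib, hl]
  · exact (support_add l z).trans (union_subset_union hlE fun i hi => (hzy hi).1)
  · calc (support (l + z)).ncard ≤ (support l).ncard + (support z).ncard :=
          (ncard_le_ncard (support_add l z)).trans (ncard_union_le _ _)
      _ ≤ finrank 𝕜 W + finrank 𝕜 (M ⧸ W) := by
          gcongr
          rw [← hli.finrank_span_image_eq_ncard]
          exact Submodule.finrank_le _
      _ = finrank 𝕜 M := by rw [add_comm, Submodule.finrank_quotient_add_finrank]
  · have hz0 : z j = 0 := notMem_support.1 fun h =>
      hli.ne_zero h ((Submodule.Quotient.mk_eq_zero _).2 hjW)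
    simp [hlE' j hj, hz0]

end Sparse

namespace PointedCone

theorem mem_hull_range_iff {𝕜 E ι : Type*} [Field 𝕜] [LinearOrder 𝕜] [IsStrictOrderedRing 𝕜]
    [AddCommGroup E] [Module 𝕜 E] [Fintype ι] {v : ι → E} {x : E} :
    x ∈ hull 𝕜 (range v) ↔ ∃ y : ι → 𝕜, 0 ≤ y ∧ ∑ i, y i • v i = x := by
  rw [Submodule.mem_span_range_iff_exists_fun]
  constructor
  · rintro ⟨c, rfl⟩
    exact ⟨fun i => c i, fun i => (c i).2, by simp [Nonneg.coe_smul]⟩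
  · rintro ⟨y, hy, rfl⟩
    exact ⟨fun i => ⟨y i, hy i⟩, by simp [← Nonneg.coe_smul]⟩

variable {E ι : Type*} [NormedAddCommGroup E] [NormedSpace ℝ E]

theorem isClosed_hull_range_of_linearIndependent [Fintype ι] {v : ι → E}
    (hv : LinearIndependent ℝ v) : IsClosed (hull ℝ (range v) : Set E) := by
  have : (hull ℝ (range v) : Set E) = Fintype.linearCombination ℝ v '' Ici 0 := by
    ext x
    simp [mem_hull_range_iff, Fintype.linearCombination_apply]
  rw [this]
  refine (LinearMap.isClosedEmbedding_of_injective ?_).isClosedMap _ isClosed_Ici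
  rwa [LinearMap.ker_eq_bot, ← linearIndependent_iff_injective_fintypeLinearCombination]

/-- By Carathéodory's theorem a finitely generated cone is the finite union of the cones spanned
by its linearly independent subfamilies, each of which is a closed embedding of an orthant. -/
theorem isClosed_hull_range [Fintype ι] (v : ι → E) : IsClosed (hull ℝ (range v) : Set E) := by
  classical
  have : (hull ℝ (range v) : Set E) =
      ⋃ s ∈ {s : Set ι | LinearIndepOn ℝ v s}, (hull ℝ (v '' s) : Set E) := by
    refine subset_antisymm (fun x hx => ?_) (iUnion₂_subset fun s _ =>
      Submodule.span_mono (image_subset_range v s))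
    obtain ⟨y, hy, rfl⟩ := mem_hull_range_iff.1 hx
    obtain ⟨z, hz, -, hzy, hli⟩ := exists_nonneg_sum_smul_eq_linearIndepOn v hy
    refine mem_biUnion hli (hzy ▸ Submodule.sum_mem _ fun i _ => ?_)
    by_cases hi : z i = 0
    · simp [hi]
    · exact smul_mem _ (hz i) (subset_hull (mem_image_of_mem v hi))
  rw [this]
  refine (toFinite _).isClosed_biUnion fun s hs => ?_
  rw [image_eq_range]
  exact isClosed_hull_range_of_linearIndependent hs

theorem exists_pos_forall_nonpos_of_notMem_hull_range [Fintype ι] {v : ι → E} {c : E}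
    (hc : c ∉ hull ℝ (range v)) : ∃ f : StrongDual ℝ E, (∀ i, f (v i) ≤ 0) ∧ 0 < f c := by
  obtain ⟨f, hf, hfc⟩ := ProperCone.hyperplane_separation_point
    ⟨hull ℝ (range v), isClosed_hull_range v⟩ hc
  exact ⟨-f, fun i => by simpa using hf (v i) (subset_hull (mem_range_self i)), by simpa⟩

end PointedCone

section LinearProgramming

open Filter Topology PointedCone

variable {κ ι : Type*} [Fintype κ] [Fintype ι]

theorem exists_dotProduct_eq (f : (κ → ℝ) →ₗ[ℝ] ℝ) : ∃ d : κ → ℝ, ∀ u, f u = u ⬝ᵥ d := by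
  classical
  exact ⟨fun k => f (fun j => if k = j then 1 else 0), fun u => by
    simp [LinearMap.pi_apply_eq_sum_univ f u, dotProduct]⟩

theorem exists_sum_smul_eq_of_forall_dotProduct_nonpos (v : ι → κ → ℝ) (P : Set ι) (c : κ → ℝ)
    (h : ∀ d, (∀ i ∈ P, v i ⬝ᵥ d ≤ 0) → (∀ i ∉ P, v i ⬝ᵥ d = 0) → c ⬝ᵥ d ≤ 0) :
    ∃ y : ι → ℝ, (∀ i ∈ P, 0 ≤ y i) ∧ ∑ i, y i • v i = c := by
  classical
  -- a free coefficient is the difference of the coefficients of `v i` and `-v i`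
  let w : ι ⊕ ι → κ → ℝ := Sum.elim v fun i => if i ∈ P then 0 else -v i
  have hc : c ∈ hull ℝ (range w) := by
    by_contra hc
    obtain ⟨f, hf, hfc⟩ := exists_pos_forall_nonpos_of_notMem_hull_range hc
    obtain ⟨d, hd⟩ := exists_dotProduct_eq (f : (κ → ℝ) →ₗ[ℝ] ℝ)
    simp only [ContinuousLinearMap.coe_coe] at hd
    refine (h d (fun i _ => ?_) (fun i hi => ?_)).not_gt (hd c ▸ hfc)
    · simpa [w, hd] using hf (.inl i)
    · have := hf (.inr i)
      simp only [w, Sum.elim_inr, if_neg hi, hd, neg_dotProduct, neg_nonpos] at this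
      exact le_antisymm (by simpa [w, hd] using hf (.inl i)) this
  obtain ⟨y, hy, hsum⟩ := mem_hull_range_iff.1 hc
  refine ⟨fun i => y (.inl i) - if i ∈ P then 0 else y (.inr i), fun i hi => by
    simpa [hi] using hy (.inl i), ?_⟩
  rw [← hsum, Fintype.sum_sum_type, ← Finset.sum_add_distrib]
  refine Finset.sum_congr rfl fun i _ => ?_
  by_cases hi : i ∈ P <;> simp [w, hi, add_smul, sub_eq_add_neg]

def feasibleSet (a : ι → κ → ℝ) (b : ι → ℝ) (E : Set ι) : Set (κ → ℝ) :=
  {x | (∀ i ∈ E, a i ⬝ᵥ x = b i) ∧ ∀ i ∉ E, a i ⬝ᵥ x ≤ b i}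

theorem eventually_dotProduct_add_smul_le {u x d : κ → ℝ} {β : ℝ} (hx : u ⬝ᵥ x ≤ β)
    (hd : u ⬝ᵥ x = β → u ⬝ᵥ d ≤ 0) : ∀ᶠ ε in 𝓝[>] (0 : ℝ), u ⬝ᵥ (x + ε • d) ≤ β := by
  simp only [dotProduct_add, dotProduct_smul, smul_eq_mul]
  rcases hx.lt_or_eq with hlt | heq
  · have : Tendsto (fun ε : ℝ => u ⬝ᵥ x + ε * u ⬝ᵥ d) (𝓝[>] 0) (𝓝 (u ⬝ᵥ x)) := by
      simpa using ((continuous_id.mul continuous_const).tendsto' 0 0 (zero_mul _)).const_add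
        (u ⬝ᵥ x) |>.mono_left nhdsWithin_le_nhds
    exact (this.eventually (gt_mem_nhds hlt)).mono fun ε => le_of_lt
  · filter_upwards [self_mem_nhdsWithin] with ε hε
    nlinarith [hd heq, mem_Ioi.1 hε]

theorem exists_add_smul_mem_feasibleSet {a : ι → κ → ℝ} {b : ι → ℝ} {E : Set ι} {x d : κ → ℝ}
    (hx : x ∈ feasibleSet a b E) (hE : ∀ i ∈ E, a i ⬝ᵥ d = 0)
    (hd : ∀ i ∉ E, a i ⬝ᵥ x = b i → a i ⬝ᵥ d ≤ 0) :
    ∃ ε : ℝ, 0 < ε ∧ x + ε • d ∈ feasibleSet a b E := by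
  have hev : ∀ᶠ ε in 𝓝[>] (0 : ℝ), ∀ i ∉ E, a i ⬝ᵥ (x + ε • d) ≤ b i :=
    eventually_all.2 fun i => by
      by_cases hi : i ∈ E
      · exact .of_forall fun _ h => absurd hi h
      · exact (eventually_dotProduct_add_smul_le (hx.2 i hi) (hd i hi)).mono fun _ h _ => h
  obtain ⟨ε, hε, hεpos⟩ := (hev.and self_mem_nhdsWithin).exists
  refine ⟨ε, hεpos, fun i hi => ?_, hε⟩
  simp [dotProduct_add, hx.1 i hi, hE i hi]

theorem exists_dual_of_isMaxOn {a : ι → κ → ℝ} {b : ι → ℝ} {E : Set ι} {c x : κ → ℝ}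
    (hx : x ∈ feasibleSet a b E) (hmax : IsMaxOn (c ⬝ᵥ ·) (feasibleSet a b E) x) :
    ∃ y : ι → ℝ, ∑ i, y i • a i = c ∧ (∀ i ∉ E, 0 ≤ y i) ∧ ∀ i, y i ≠ 0 → a i ⬝ᵥ x = b i := by
  classical
  let S := {i | a i ⬝ᵥ x = b i}
  obtain ⟨y, hy, hsum⟩ := exists_sum_smul_eq_of_forall_dotProduct_nonpos (S.indicator a) Eᶜ c
    fun d hP hfree => by
      by_contra! hcd
      obtain ⟨ε, hε, hfeas⟩ := exists_add_smul_mem_feasibleSet hx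
        (fun i hi => by simpa [S, hx.1 i hi] using hfree i (not_not.2 hi))
        (fun i hi hti => by simpa [S, hti] using hP i hi)
      have : c ⬝ᵥ (x + ε • d) ≤ c ⬝ᵥ x := hmax hfeas
      simp only [dotProduct_add, dotProduct_smul, smul_eq_mul] at this
      nlinarith [mul_pos hε hcd]
  refine ⟨S.indicator y, ?_, fun i hi => ?_, fun i hi => by_contra fun hti => hi ?_⟩
  · rw [← hsum]
    refine Finset.sum_congr rfl fun i _ => ?_
    by_cases hi : i ∈ S <;> simp [hi]
  · by_cases hiS : i ∈ S <;> simp [hiS, hy i hi]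
  · exact indicator_of_notMem (s := S) hti y

theorem sum_mul_eq_dotProduct_of_complementary {a : ι → κ → ℝ} {b y : ι → ℝ} {c x : κ → ℝ}
    (hy : ∑ i, y i • a i = c) (hcs : ∀ i, y i ≠ 0 → a i ⬝ᵥ x = b i) :
    ∑ i, b i * y i = c ⬝ᵥ x := by
  rw [← hy, sum_dotProduct]
  refine Finset.sum_congr rfl fun i _ => ?_
  by_cases hi : y i = 0
  · simp [hi]
  · simp [smul_dotProduct, hcs i hi, mul_comm]

end LinearProgramming

theorem structured_optimal_dual_solution_general
    (n m : ℕ)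
    (A : Matrix (Fin m) (Fin n) ℤ) (b : Fin m → ℤ)
    (E : Set (Fin m)) (ct : Fin n → ℤ)
    (F : Set (Fin n → ℝ))
    (hF : F = {x : Fin n → ℝ |
      (∀ i ∈ E, ∑ j, (A i j : ℝ) * x j = (b i : ℝ)) ∧
      (∀ i ∉ E, ∑ j, (A i j : ℝ) * x j ≤ (b i : ℝ))})
    (μ : ℝ) (hμ : IsGreatest ((fun x => ∑ j, (ct j : ℝ) * x j) '' F) μ) :
    ∃ y : Fin m → ℝ,
      (∀ j, ∑ i, (A i j : ℝ) * y i = (ct j : ℝ)) ∧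
      (∀ i ∉ E, 0 ≤ y i) ∧
      (∑ i, (b i : ℝ) * y i = μ) ∧
      {i | y i ≠ 0}.ncard ≤ n ∧
      (∀ j ∉ E,
        (fun jj => (A j jj : ℝ)) ∈
          Submodule.span ℝ ((fun i => fun jj => (A i jj : ℝ)) '' E) → y j = 0) := by
  set a : Fin m → Fin n → ℝ := fun i j => A i j
  set c : Fin n → ℝ := fun j => ct j
  replace hF : F = feasibleSet a (fun i => b i) E := hF
  obtain ⟨x, hx, rfl⟩ := hμ.1
  have hmax : IsMaxOn (c ⬝ᵥ ·) F x := fun x' hx' => hμ.2 ⟨x', hx', rfl⟩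
  rw [hF] at hx hmax
  obtain ⟨y, hyc, hyE, hcs⟩ := exists_dual_of_isMaxOn hx hmax
  obtain ⟨y', hy'y, hy'E, hsupp, hcard, hred⟩ := exists_sparse_sum_smul_eq a E hyE
  refine ⟨y', fun j => ?_, hy'E, ?_, hcard.trans_eq (Module.finrank_fin_fun ℝ), hred⟩
  · simpa [a, c, mul_comm] using congrFun (hy'y.trans hyc) j
  · refine sum_mul_eq_dotProduct_of_complementary (hy'y.trans hyc) fun i hi => ?_
    rcases hsupp hi with hiE | hiy
    · exact hx.1 i hiE
    · exact hcs i hiy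

theorem structured_optimal_dual_solution
    (n m : ℕ)
    (A : Matrix (Fin m) (Fin n) ℤ) (b : Fin m → ℤ)
    (E : Set (Fin m)) (ct : Fin n → ℤ)
    (F : Set (Fin n → ℝ))
    (hF : F = {x : Fin n → ℝ |
      (∀ i ∈ E, ∑ j, (A i j : ℝ) * x j = (b i : ℝ)) ∧
      (∀ i ∉ E, ∑ j, (A i j : ℝ) * x j ≤ (b i : ℝ))})
    (hFne : F.Nonempty) (hFbdd : Bornology.IsBounded F)
    (μ : ℝ) (hμ : IsGreatest ((fun x => ∑ j, (ct j : ℝ) * x j) '' F) μ) :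
    ∃ y : Fin m → ℝ,
      (∀ j, ∑ i, (A i j : ℝ) * y i = (ct j : ℝ)) ∧
      (∀ i ∉ E, 0 ≤ y i) ∧
      (∑ i, (b i : ℝ) * y i = μ) ∧
      {i | y i ≠ 0}.ncard ≤ n ∧
      (∀ j ∉ E,
        (fun jj => (A j jj : ℝ)) ∈
          Submodule.span ℝ ((fun i => fun jj => (A i jj : ℝ)) '' E) → y j = 0) :=
  structured_optimal_dual_solution_general n m A b E ct F hF μ hμ
end

section
/- Let n, k ≥ 1 be integers, let A ∈ ℤ^{m×n} with rows a₁, …, a_m, let b ∈ ℤ^m, let E ⊆ {1,…,m}, and let F = {x ∈ ℝⁿ ∣ aᵢᵀx = bᵢ for i ∈ E, aᵢᵀx ≤ bᵢ for i ∉ E}, with F ⊆ [0,k]ⁿ. Let x̃ ∈ F, ĉ ∈ ℝⁿ, and ỹ ∈ ℝ^m satisfy: |Aᵀỹ − ĉ| ≤ 1 componentwise; ỹᵢ ≥ 0 for every i ∉ E; and, for every i ∉ E, ỹᵢ > 0 implies aᵢᵀx̃ = bᵢ. Then for every x̂ ∈ F ∩ ℤⁿ with ĉᵀx̂ ≥ ĉᵀx̃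 and every i ∉ E with ỹᵢ > n·k, one has aᵢᵀx̂ = bᵢ. -/
/-!
Put `d = x̂ - x̃` and compare both sides of `ỹ ⬝ᵥ A d = (Aᵀỹ) ⬝ᵥ d`. Row by row, complementary
slackness makes every term `ỹᵢ (aᵢᵀx̂ - aᵢᵀx̃)` nonpositive, and if row `i` were not tight at the
integral point `x̂`, integrality would give `aᵢᵀx̂ ≤ bᵢ - 1`, so the left side is at most `-ỹᵢ`.
Column by column, `Aᵀỹ` is within `1` of `ĉ`, `ĉᵀd ≥ 0` and `|dⱼ| ≤ k`, so the right side is at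
least `-n k`. Hence `ỹᵢ ≤ n k`.
-/

open Finset Matrix

namespace Matrix

variable {ι κ : Type*} [Fintype κ]

def polyhedronFace (M : Matrix ι κ ℝ) (b : ι → ℝ) (E : Set ι) : Set (κ → ℝ) :=
  {x | (∀ i ∈ E, (M *ᵥ x) i = b i) ∧ ∀ i ∉ E, (M *ᵥ x) i ≤ b i}

theorem mulVec_le_sub_one_of_lt (A : Matrix ι κ ℤ) (b : ι → ℤ) {x : κ → ℝ}
    (hx : ∀ j, ∃ z : ℤ, x j = z) {i : ι} (h : (A.map (↑) *ᵥ x) i < b i) :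
    (A.map (↑) *ᵥ x) i ≤ b i - 1 := by
  choose z hz using hx
  have hcast : (A.map (↑) *ᵥ x) i = ((A *ᵥ z) i : ℝ) := by
    rw [show x = (Int.castRingHom ℝ) ∘ z from funext hz]
    exact (RingHom.map_mulVec (Int.castRingHom ℝ) A z i).symm
  rw [hcast] at h ⊢
  exact_mod_cast Int.le_sub_one_of_lt (by exact_mod_cast h)

theorem abs_dotProduct_le_card_mul {w d : κ → ℝ} {a k : ℝ} (hw : ∀ j, |w j| ≤ a)
    (hd : ∀ j, |d j| ≤ k) : |w ⬝ᵥ d| ≤ Fintype.card κ * (a * k) := by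
  calc |w ⬝ᵥ d| ≤ ∑ j, |w j| * |d j| := by
        simpa only [dotProduct, abs_mul] using abs_sum_le_sum_abs (fun j => w j * d j) univ
    _ ≤ ∑ _j : κ, a * k :=
        sum_le_sum fun j _ => mul_le_mul (hw j) (hd j) (abs_nonneg _) ((abs_nonneg _).trans (hw j))
    _ = Fintype.card κ * (a * k) := by simp

variable {M : Matrix ι κ ℝ} {b : ι → ℝ} {E : Set ι} {u v : κ → ℝ} {y : ι → ℝ}

theorem neg_card_mul_le_dotProduct_mulVec_sub [Fintype ι] {c : κ → ℝ} {k : ℝ}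
    (hclose : ∀ j, |(Mᵀ *ᵥ y) j - c j| ≤ 1) (hdist : ∀ j, |u j - v j| ≤ k)
    (hobj : c ⬝ᵥ v ≤ c ⬝ᵥ u) :
    -(Fintype.card κ * k) ≤ y ⬝ᵥ (M *ᵥ u - M *ᵥ v) := by
  have hsplit : y ⬝ᵥ (M *ᵥ u - M *ᵥ v) = (Mᵀ *ᵥ y - c) ⬝ᵥ (u - v) + (c ⬝ᵥ u - c ⬝ᵥ v) := by
    rw [← mulVec_sub, dotProduct_mulVec, ← mulVec_transpose, sub_dotProduct, dotProduct_sub c]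
    ring
  have herr := abs_dotProduct_le_card_mul (w := Mᵀ *ᵥ y - c) (d := u - v) hclose hdist
  rw [one_mul] at herr
  rw [hsplit]
  linarith [neg_abs_le ((Mᵀ *ᵥ y - c) ⬝ᵥ (u - v))]

section ComplementarySlackness

variable (hu : u ∈ M.polyhedronFace b E) (hv : v ∈ M.polyhedronFace b E)
  (hy : ∀ i ∉ E, 0 ≤ y i) (hcs : ∀ i ∉ E, 0 < y i → (M *ᵥ v) i = b i)
include hu hv hy hcs

theorem mul_mulVec_sub_nonpos (i : ι) : y i * ((M *ᵥ u) i - (M *ᵥ v) i) ≤ 0 := by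
  by_cases hiE : i ∈ E
  · simp [hu.1 i hiE, hv.1 i hiE]
  rcases (hy i hiE).lt_or_eq with hpos | hzero
  · rw [hcs i hiE hpos]
    exact mul_nonpos_of_nonneg_of_nonpos hpos.le (sub_nonpos.2 (hu.2 i hiE))
  · simp [← hzero]

theorem dotProduct_mulVec_sub_le_neg [Fintype ι] {i₀ : ι} (hi₀ : i₀ ∉ E) (hpos : 0 < y i₀)
    (hgap : (M *ᵥ u) i₀ ≤ b i₀ - 1) : y ⬝ᵥ (M *ᵥ u - M *ᵥ v) ≤ -y i₀ := by
  classical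
  have hrest : ∑ i ∈ univ.erase i₀, y i * ((M *ᵥ u) i - (M *ᵥ v) i) ≤ 0 :=
    sum_nonpos fun i _ => mul_mulVec_sub_nonpos hu hv hy hcs i
  have hterm : y i₀ * ((M *ᵥ u) i₀ - (M *ᵥ v) i₀) ≤ -y i₀ := by
    rw [hcs i₀ hi₀ hpos]
    nlinarith
  rw [dotProduct, ← add_sum_erase _ _ (mem_univ i₀)]
  simp only [Pi.sub_apply] at hrest hterm ⊢
  linarith

end ComplementarySlackness

end Matrix

theorem near_dual_feasibility_forces_active_constraints_general
    (n m k : ℕ)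
    (A : Matrix (Fin m) (Fin n) ℤ) (b : Fin m → ℤ) (E : Set (Fin m))
    (F : Set (Fin n → ℝ))
    (hF : F = {x : Fin n → ℝ |
      (∀ i ∈ E, ∑ j, (A i j : ℝ) * x j = (b i : ℝ)) ∧
      (∀ i ∉ E, ∑ j, (A i j : ℝ) * x j ≤ (b i : ℝ))})
    (hFbox : ∀ x ∈ F, ∀ j, 0 ≤ x j ∧ x j ≤ (k : ℝ))
    (xt : Fin n → ℝ) (hxt : xt ∈ F)
    (ch : Fin n → ℝ) (y : Fin m → ℝ)
    (hclose : ∀ j, |(∑ i, (A i j : ℝ) * y i) - ch j| ≤ 1)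
    (hynn : ∀ i ∉ E, 0 ≤ y i)
    (hcs : ∀ i ∉ E, 0 < y i → ∑ j, (A i j : ℝ) * xt j = (b i : ℝ)) :
    ∀ xh ∈ F, (∀ j, ∃ z : ℤ, xh j = (z : ℝ)) →
      ∑ j, ch j * xt j ≤ ∑ j, ch j * xh j →
      ∀ i ∉ E, (n : ℝ) * k < y i → ∑ j, (A i j : ℝ) * xh j = (b i : ℝ) := by
  intro xh hxh hint hobj i₀ hi₀ hy
  have hdist j : |xh j - xt j| ≤ k :=
    abs_sub_le_of_nonneg_of_le (hFbox xh hxh j).1 (hFbox xh hxh j).2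
      (hFbox xt hxt j).1 (hFbox xt hxt j).2
  subst hF
  have hpos : 0 < y i₀ := lt_of_le_of_lt (by positivity) hy
  by_contra hslack
  have hgap := mulVec_le_sub_one_of_lt A b hint (lt_of_le_of_ne (hxh.2 i₀ hi₀) hslack)
  have hupper := dotProduct_mulVec_sub_le_neg (M := A.map (↑)) (b := fun i => (b i : ℝ))
    hxh hxt hynn hcs hi₀ hpos hgap
  have hlower := neg_card_mul_le_dotProduct_mulVec_sub (M := A.map (↑)) hclose hdist hobj
  rw [Fintype.card_fin] at hlower
  linarith

theorem near_dual_feasibility_forces_active_constraints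
    (n m k : ℕ) (hn : 1 ≤ n) (hk : 1 ≤ k)
    (A : Matrix (Fin m) (Fin n) ℤ) (b : Fin m → ℤ) (E : Set (Fin m))
    (F : Set (Fin n → ℝ))
    (hF : F = {x : Fin n → ℝ |
      (∀ i ∈ E, ∑ j, (A i j : ℝ) * x j = (b i : ℝ)) ∧
      (∀ i ∉ E, ∑ j, (A i j : ℝ) * x j ≤ (b i : ℝ))})
    (hFbox : ∀ x ∈ F, ∀ j, 0 ≤ x j ∧ x j ≤ (k : ℝ))
    (xt : Fin n → ℝ) (hxt : xt ∈ F)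
    (ch : Fin n → ℝ) (y : Fin m → ℝ)
    (hclose : ∀ j, |(∑ i, (A i j : ℝ) * y i) - ch j| ≤ 1)
    (hynn : ∀ i ∉ E, 0 ≤ y i)
    (hcs : ∀ i ∉ E, 0 < y i → ∑ j, (A i j : ℝ) * xt j = (b i : ℝ)) :
    ∀ xh ∈ F, (∀ j, ∃ z : ℤ, xh j = (z : ℝ)) →
      ∑ j, ch j * xt j ≤ ∑ j, ch j * xh j →
      ∀ i ∉ E, (n : ℝ) * k < y i → ∑ j, (A i j : ℝ) * xh j = (b i : ℝ) :=
  near_dual_feasibility_forces_active_constraints_general n m k A b E F hF hFbox xt hxt ch y hclose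
    hynn hcs
end
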